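/- Let σ be a rational polyhedral cone in ℝ^n (an intersection of finitely many rational half-spaces through the origin). Then the semigroup S = σ ∩ ℤ^n is finitely generated as an additive semigroup (Gordan's lemma). -/

import Mathlib

/-!
Write a lattice point of the cone as `m = ∑ r v • v` with `r ≥ 0` and split each coefficient into
its integer and fractional part: `m = p + ∑ ⌊r v⌋ • v`, where `p = ∑ (r v - ⌊r v⌋) • v` is a
lattice point of the zonotope `{∑ r v • v | 0 ≤ r ≤ 1}`. The zonotope is bounded, so it contains
only finitely many lattice points, and it contains every generator `v ∈ s`; hence its lattice
points generate the semigroup.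
-/

open Finset

section

variable (𝕜 : Type*) [Field 𝕜] [LinearOrder 𝕜] [IsStrictOrderedRing 𝕜] {ι : Type*}

def latticeCone (s : Finset (ι → ℤ)) : AddSubmonoid (ι → ℤ) where
  carrier := {m | ∃ r : (ι → ℤ) → 𝕜, (∀ v, 0 ≤ r v) ∧
    (Int.castAddHom 𝕜).compLeft ι m = ∑ v ∈ s, r v • (Int.castAddHom 𝕜).compLeft ι v}
  zero_mem' := ⟨0, fun _ => le_rfl, by simp⟩
  add_mem' := by
    rintro a b ⟨ra, hra, ha⟩ ⟨rb, hrb, hb⟩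
    refine ⟨ra + rb, fun v => add_nonneg (hra v) (hrb v), ?_⟩
    simp only [map_add, ha, hb, Pi.add_apply, add_smul, sum_add_distrib]

def latticeZonotope (s : Finset (ι → ℤ)) : Set (ι → ℤ) :=
  {m | ∃ r : (ι → ℤ) → 𝕜, (∀ v, r v ∈ Set.Icc 0 1) ∧
    (Int.castAddHom 𝕜).compLeft ι m = ∑ v ∈ s, r v • (Int.castAddHom 𝕜).compLeft ι v}

variable {𝕜} {s : Finset (ι → ℤ)}

theorem latticeZonotope_subset_latticeCone : latticeZonotope 𝕜 s ⊆ latticeCone 𝕜 s :=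
  fun _ ⟨r, hr, hm⟩ => ⟨r, fun v => (hr v).1, hm⟩

theorem subset_latticeZonotope : (s : Set (ι → ℤ)) ⊆ latticeZonotope 𝕜 s := by
  classical
  intro v hv
  refine ⟨Pi.single v 1, fun w => ?_, ?_⟩
  · rcases eq_or_ne w v with rfl | h <;> simp [*]
  · simp [Pi.single_apply, mem_coe.mp hv]

theorem abs_le_of_mem_latticeZonotope {m : ι → ℤ} (hm : m ∈ latticeZonotope 𝕜 s) (j : ι) :
    |m j| ≤ ∑ v ∈ s, |v j| := by
  obtain ⟨r, hr, hm⟩ := hm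
  have hmj : (m j : 𝕜) = ∑ v ∈ s, r v * v j := by simpa using congrFun hm j
  have : |(m j : 𝕜)| ≤ ∑ v ∈ s, |(v j : 𝕜)| :=
    calc |(m j : 𝕜)| ≤ ∑ v ∈ s, |r v * v j| := hmj ▸ abs_sum_le_sum_abs _ _
      _ ≤ ∑ v ∈ s, |(v j : 𝕜)| := sum_le_sum fun v _ => by
          rw [abs_mul, abs_of_nonneg (hr v).1]
          exact mul_le_of_le_one_left (abs_nonneg _) (hr v).2
  exact_mod_cast this

theorem latticeZonotope_finite [Finite ι] : (latticeZonotope 𝕜 s).Finite :=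
  (Set.Finite.pi fun j => Set.finite_Icc (-∑ v ∈ s, |v j|) (∑ v ∈ s, |v j|)).subset
    fun _ hm j _ => abs_le.mp (abs_le_of_mem_latticeZonotope hm j)

theorem exists_mem_latticeZonotope_add_sum_nsmul [FloorRing 𝕜] {m : ι → ℤ}
    (hm : m ∈ latticeCone 𝕜 s) :
    ∃ p ∈ latticeZonotope 𝕜 s, ∃ q : (ι → ℤ) → ℕ, m = p + ∑ v ∈ s, q v • v := by
  obtain ⟨r, hr, hm⟩ := hm
  refine ⟨m - ∑ v ∈ s, ⌊r v⌋₊ • v, ⟨fun v => r v - ⌊r v⌋₊, fun v => ⟨?_, ?_⟩, ?_⟩,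
    fun v => ⌊r v⌋₊, by abel⟩
  · exact sub_nonneg.mpr (Nat.floor_le (hr v))
  · linarith [Nat.lt_floor_add_one (r v)]
  · simp only [map_sub, map_sum, map_nsmul, hm, sub_smul, sum_sub_distrib, Nat.cast_smul_eq_nsmul]

theorem closure_latticeZonotope [FloorRing 𝕜] :
    AddSubmonoid.closure (latticeZonotope 𝕜 s) = latticeCone 𝕜 s := by
  refine AddSubmonoid.closure_eq_of_le latticeZonotope_subset_latticeCone fun m hm => ?_
  obtain ⟨p, hp, q, rfl⟩ := exists_mem_latticeZonotope_add_sum_nsmul hm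
  exact add_mem (AddSubmonoid.subset_closure hp) <| sum_mem fun v hv =>
    nsmul_mem (AddSubmonoid.subset_closure (subset_latticeZonotope hv)) _

end

theorem gordan_lemma
    {n : ℕ} (s : Finset (Fin n → ℤ)) :
    ∃ T : Finset (Fin n → ℤ),
      (AddSubmonoid.closure (T : Set (Fin n → ℤ)) : Set (Fin n → ℤ)) =
        {m : Fin n → ℤ | ∃ r : (Fin n → ℤ) → ℝ, (∀ v, 0 ≤ r v) ∧
          (fun j => (m j : ℝ)) = ∑ v ∈ s, r v • (fun j => (v j : ℝ))} := by
  refine ⟨(latticeZonotope_finite (𝕜 := ℝ) (s := s)).toFinset, ?_⟩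
  rw [Set.Finite.coe_toFinset, closure_latticeZonotope]
  rfl
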